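/- With the setup of a concatenated CSS code pair: let (C1,C2) be an [[n,k]] code pair over F_q (i.e., C2^⊥ ≤ C1, k = dim C1 + dim C2 − n), with maps π_1, π_2 : F_{q^k}^N → F_q^{nN} constructed from dual generator vectors and dual trace bases as above, and let (D1,D2) be an [[N,K]] code pair over F_{q^k} (i.e., D2^⊥ ≤ D1). Then (π_1(D2^⊥) + ⊕_{i=1}^N C2^⊥)^⊥ = π_2(D2) + ⊕_{i=1}^N C1^⊥, where duals on the left and right are taken in F_q^{nN} with respect to the standard dot product. -/

import Mathlib

def dualCode {F : Type*} [Field F] {ι : Type*} [Fintype ι]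
    (C : Submodule F (ι → F)) : Submodule F (ι → F) where
  carrier := {y | ∀ x ∈ C, dotProduct x y = 0}
  add_mem' := by
    intro a b ha hb x hx
    simp [dotProduct_add, ha x hx, hb x hx]
  zero_mem' := by intro x hx; simp
  smul_mem' := by
    intro c a ha x hx
    simp [dotProduct_smul, ha x hx]

/-- The direct sum of `N` copies of a code `C ≤ F^n` inside `F^(N×n)`. -/
def blockCode {F : Type*} [Field F] {n N : ℕ} (C : Submodule F (Fin n → F)) :
    Submodule F (Fin N × Fin n → F) where
  carrier := {v | ∀ i : Fin N, (fun j => v (i, j)) ∈ C}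
  add_mem' := by
    intro a b ha hb i
    exact C.add_mem (ha i) (hb i)
  zero_mem' := by
    intro i
    exact C.zero_mem
  smul_mem' := by
    intro c a ha i
    exact C.smul_mem c (ha i)

/-! Let `dec v ∈ K^N` read the `i`-th block of `v` through the pairings `⟨g1 a, v_i⟩` as
coordinates in the basis `b2`. Since `tr (b1 a * b2 b) = δ_ab`, one has
`π₁ x ⬝ v = tr (x ⬝ dec v)`, and `dec (π₂ y) = y` because `⟨g1 a, g2 b⟩ = δ_ab`; hence
`π₁ x ⬝ π₂ y = tr (x ⬝ y)`, which gives `⊇`. Conversely, if `v` is orthogonal to the left-hand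
sum, its blocks lie in `C2`, `y := dec v` lies in `D2` by nondegeneracy of the trace form, and
`v - π₂ y` has blocks in `C1^⊥` since `C2 = C1^⊥ + span g2` and the `g1 a ∈ C1` are
orthogonal to `C1^⊥`. -/

open Submodule Function

section DualCode

variable {F : Type*} [Field F] {ι : Type*} [Fintype ι]

theorem mem_dualCode_span_iff {S : Set (ι → F)} {w : ι → F} :
    w ∈ dualCode (span F S) ↔ ∀ s ∈ S, s ⬝ᵥ w = 0 := by
  refine ⟨fun h s hs => h s (subset_span hs), fun h x hx => ?_⟩
  induction hx using span_induction with
  | mem s hs => exact h s hs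
  | zero => exact zero_dotProduct w
  | add a b _ _ ha hb => rw [add_dotProduct, ha, hb, add_zero]
  | smul c a _ ha => rw [smul_dotProduct, ha, smul_zero]

theorem dualCode_sup (A B : Submodule F (ι → F)) :
    dualCode (A ⊔ B) = dualCode A ⊓ dualCode B := by
  ext y
  refine ⟨fun h => ⟨fun a ha => h a (mem_sup_left ha), fun b hb => h b (mem_sup_right hb)⟩,
    fun ⟨hA, hB⟩ x hx => ?_⟩
  obtain ⟨a, ha, b, hb, rfl⟩ := mem_sup.mp hx
  rw [add_dotProduct, hA a ha, hB b hb, add_zero]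

theorem dualCode_dualCode (C : Submodule F (ι → F)) : dualCode (dualCode C) = C := by
  classical
  let B : LinearMap.BilinForm F (ι → F) := dotProductBilin F F
  have hdual : ∀ D, dualCode D = B.orthogonal D := fun D => by
    ext y
    simp [B, dualCode, LinearMap.BilinForm.mem_orthogonal_iff, dotProduct_comm]
  have hnondeg : B.Nondegenerate := by
    refine ⟨fun x hx => funext fun i => ?_, fun x hx => funext fun i => ?_⟩
    · simpa [B, dotProduct_single] using hx (Pi.single i 1)
    · simpa [B, single_dotProduct] using hx (Pi.single i 1)
  have hrefl : B.IsRefl := fun x y h => by simpa [B, dotProduct_comm] using h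
  rw [hdual, hdual]
  exact LinearMap.BilinForm.orthogonal_orthogonal hnondeg hrefl C

end DualCode

section BlockCode

variable {F : Type*} [Field F] {n N : ℕ}

theorem dotProduct_eq_sum_curry {ι κ : Type*} [Fintype ι] [Fintype κ] (u w : ι × κ → F) :
    u ⬝ᵥ w = ∑ i, curry u i ⬝ᵥ curry w i := by
  rw [dotProduct, Fintype.sum_prod_type]
  rfl

theorem dotProduct_eq_zero_of_mem_blockCode {C : Submodule F (Fin n → F)}
    {u w : Fin N × Fin n → F} (hu : u ∈ blockCode C) (hw : w ∈ blockCode (dualCode C)) :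
    u ⬝ᵥ w = 0 := by
  rw [dotProduct_eq_sum_curry]
  exact Finset.sum_eq_zero fun i _ => hw i _ (hu i)

theorem blockCode_mono {C D : Submodule F (Fin n → F)} (h : C ≤ D) :
    blockCode (N := N) C ≤ blockCode D :=
  fun _ hv i => h (hv i)

theorem dualCode_blockCode (C : Submodule F (Fin n → F)) :
    dualCode (blockCode (N := N) C) = blockCode (dualCode C) := by
  classical
  refine le_antisymm (fun w hw i c hc => ?_) fun w hw u hu => ?_
  · have hsingle : uncurry (Pi.single i c) ∈ blockCode (N := N) C := fun i' => by
      by_cases h : i' = i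
      · subst h; simpa using hc
      · simp only [uncurry_apply_pair, Pi.single_eq_of_ne h]
        exact C.zero_mem
    have := hw _ hsingle
    rw [dotProduct_eq_sum_curry, Finset.sum_eq_single i (fun i' _ h => by simp [h])
      (by simp), curry_uncurry, Pi.single_eq_same] at this
    exact this
  · exact dotProduct_eq_zero_of_mem_blockCode hu hw

end BlockCode

section TraceDualBasis

variable {F K : Type*} [Field F] [Field K] [Algebra F K] {ι : Type*} [Fintype ι] [DecidableEq ι]
  {b1 b2 : Module.Basis ι F K}

theorem trace_mul_eq_repr
    (hdual : ∀ i j, Algebra.trace F K (b1 i * b2 j) = if i = j then 1 else 0) (u : K) (a : ι) :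
    Algebra.trace F K (u * b2 a) = b1.repr u a := by
  conv_lhs => rw [← b1.sum_repr u]
  simp only [Finset.sum_mul, map_sum, smul_mul_assoc, map_smul, hdual, smul_eq_mul, mul_ite,
    mul_one, mul_zero, Finset.sum_ite_eq', Finset.mem_univ, if_true]

theorem eq_zero_of_forall_trace_mul_eq_zero
    (hdual : ∀ i j, Algebra.trace F K (b1 i * b2 j) = if i = j then 1 else 0) {t : K}
    (h : ∀ c, Algebra.trace F K (c * t) = 0) : t = 0 :=
  b1.ext_elem fun a => by
    rw [← trace_mul_eq_repr hdual, mul_comm, h, map_zero, Finsupp.zero_apply]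

end TraceDualBasis

section Biorthogonal

variable {F : Type*} [Field F] {ι m : Type*} [Fintype ι] [DecidableEq ι] [Fintype m]
  {g1 g2 : ι → m → F}

theorem dotProduct_sum_smul_of_biorthogonal
    (hg : ∀ i j, g1 i ⬝ᵥ g2 j = if i = j then 1 else 0) (c : ι → F) (a : ι) :
    g1 a ⬝ᵥ ∑ b, c b • g2 b = c a := by
  simp [dotProduct_sum, dotProduct_smul, hg]

theorem sub_sum_dotProduct_smul_mem_dualCode
    (hg : ∀ i j, g1 i ⬝ᵥ g2 j = if i = j then 1 else 0) {C : Submodule F (m → F)}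
    (hg1 : ∀ a, g1 a ∈ C) {v : m → F} (hv : v ∈ dualCode C ⊔ span F (Set.range g2)) :
    v - ∑ a, (g1 a ⬝ᵥ v) • g2 a ∈ dualCode C := by
  obtain ⟨d, hd, s, hs, rfl⟩ := mem_sup.mp hv
  obtain ⟨c, rfl⟩ := (mem_span_range_iff_exists_fun F).mp hs
  have hcoeff : ∀ a, g1 a ⬝ᵥ (d + ∑ b, c b • g2 b) = c a := fun a => by
    rw [dotProduct_add, hd _ (hg1 a), zero_add, dotProduct_sum_smul_of_biorthogonal hg]
  simpa only [hcoeff, add_sub_cancel_right] using hd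

end Biorthogonal

noncomputable section Concatenation

variable {F K : Type*} [Field F] [Field K] [Algebra F K] {ι : Type*} [Fintype ι] {n N : ℕ}

/-- The map `π` of the paper, with `b` the trace-dual basis and `g` the generators. -/
def concatEncode (b : Module.Basis ι F K) (g : ι → Fin n → F) (x : Fin N → K) :
    Fin N × Fin n → F :=
  fun q => ∑ a, b.repr (x q.1) a • g a q.2

def concatDecode (b : Module.Basis ι F K) (g : ι → Fin n → F) (v : Fin N × Fin n → F) :
    Fin N → K :=
  fun i => ∑ a, (g a ⬝ᵥ curry v i) • b a

theorem curry_concatEncode (b : Module.Basis ι F K) (g : ι → Fin n → F) (x : Fin N → K)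
    (i : Fin N) : curry (concatEncode b g x) i = ∑ a, b.repr (x i) a • g a := by
  funext j
  simp [concatEncode, Finset.sum_apply]

theorem repr_concatDecode (b : Module.Basis ι F K) (g : ι → Fin n → F)
    (v : Fin N × Fin n → F) (i : Fin N) (a : ι) :
    b.repr (concatDecode b g v i) a = g a ⬝ᵥ curry v i := by
  rw [concatDecode, b.repr_sum_self]

theorem concatEncode_mem_blockCode (b : Module.Basis ι F K) {g : ι → Fin n → F}
    {C : Submodule F (Fin n → F)} (hg : ∀ a, g a ∈ C) (x : Fin N → K) :
    concatEncode b g x ∈ blockCode C := fun i => by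
  change curry (concatEncode b g x) i ∈ C
  rw [curry_concatEncode]
  exact sum_mem fun a _ => C.smul_mem _ (hg a)

theorem blockCode_dualCode_le_dualCode_span (b : Module.Basis ι F K)
    {C : Submodule F (Fin n → F)} {g : ι → Fin n → F} (hg : ∀ a, g a ∈ C) (S : Set (Fin N → K)) :
    blockCode (dualCode C) ≤ dualCode (span F (concatEncode b g '' S)) := fun w hw =>
  mem_dualCode_span_iff.2 <| by
    rintro _ ⟨x, -, rfl⟩
    exact dotProduct_eq_zero_of_mem_blockCode (concatEncode_mem_blockCode b hg x) hw

variable [DecidableEq ι] {b1 b2 : Module.Basis ι F K} {g1 g2 : ι → Fin n → F}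

theorem concatEncode_dotProduct
    (hdual : ∀ i j, Algebra.trace F K (b1 i * b2 j) = if i = j then 1 else 0)
    (x : Fin N → K) (v : Fin N × Fin n → F) :
    concatEncode b1 g1 x ⬝ᵥ v = Algebra.trace F K (x ⬝ᵥ concatDecode b2 g1 v) := by
  rw [dotProduct_eq_sum_curry, dotProduct, map_sum]
  refine Finset.sum_congr rfl fun i _ => ?_
  simp only [curry_concatEncode, sum_dotProduct, smul_dotProduct, concatDecode, Finset.mul_sum,
    map_sum, mul_smul_comm, map_smul, trace_mul_eq_repr hdual, smul_eq_mul]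
  exact Finset.sum_congr rfl fun a _ => mul_comm _ _

theorem concatDecode_concatEncode (hg : ∀ i j, g1 i ⬝ᵥ g2 j = if i = j then 1 else 0)
    (y : Fin N → K) : concatDecode b2 g1 (concatEncode b2 g2 y) = y :=
  funext fun i => by
    simp only [concatDecode, curry_concatEncode, dotProduct_sum_smul_of_biorthogonal hg,
      b2.sum_repr]

theorem span_concatEncode_le_dualCode
    (hdual : ∀ i j, Algebra.trace F K (b1 i * b2 j) = if i = j then 1 else 0)
    (hg : ∀ i j, g1 i ⬝ᵥ g2 j = if i = j then 1 else 0) (D : Submodule K (Fin N → K)) :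
    span F (concatEncode b2 g2 '' (D : Set (Fin N → K)))
      ≤ dualCode (span F (concatEncode b1 g1 '' (dualCode D : Set (Fin N → K)))) := by
  rw [span_le]
  rintro _ ⟨y, hy, rfl⟩
  rw [SetLike.mem_coe, mem_dualCode_span_iff]
  rintro _ ⟨x, hx, rfl⟩
  rw [concatEncode_dotProduct hdual, concatDecode_concatEncode hg, dotProduct_comm, hx y hy,
    map_zero]

theorem dualCode_span_concatEncode_inf_blockCode_le
    (hdual : ∀ i j, Algebra.trace F K (b1 i * b2 j) = if i = j then 1 else 0)
    (hg : ∀ i j, g1 i ⬝ᵥ g2 j = if i = j then 1 else 0) {C1 : Submodule F (Fin n → F)}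
    (hg1 : ∀ a, g1 a ∈ C1) (D : Submodule K (Fin N → K)) :
    dualCode (span F (concatEncode b1 g1 '' (dualCode D : Set (Fin N → K))))
        ⊓ blockCode (dualCode C1 ⊔ span F (Set.range g2))
      ≤ span F (concatEncode b2 g2 '' (D : Set (Fin N → K))) ⊔ blockCode (dualCode C1) := by
  rintro v ⟨hv, hvC2⟩
  set y := concatDecode b2 g1 v
  have hy : y ∈ D := by
    rw [← dualCode_dualCode D]
    intro x hx
    refine eq_zero_of_forall_trace_mul_eq_zero hdual fun c => ?_
    rw [← smul_eq_mul, ← smul_dotProduct, ← concatEncode_dotProduct hdual]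
    exact hv _ (subset_span ⟨c • x, (dualCode D).smul_mem c hx, rfl⟩)
  have hrest : v - concatEncode b2 g2 y ∈ blockCode (dualCode C1) := fun i => by
    change curry v i - curry (concatEncode b2 g2 y) i ∈ _
    simp only [curry_concatEncode, y, repr_concatDecode]
    exact sub_sum_dotProduct_smul_mem_dualCode hg hg1 (hvC2 i)
  rw [← add_sub_cancel (concatEncode b2 g2 y) v]
  exact add_mem (mem_sup_left (subset_span ⟨y, hy, rfl⟩)) (mem_sup_right hrest)

end Concatenation

theorem stmt2_general {F K : Type*} [Field F] [Field K] [Algebra F K]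
    {k n N : ℕ}
    (b1 b2 : Module.Basis (Fin k) F K)
    (hdualb : ∀ i j, Algebra.trace F K (b1 i * b2 j) = if i = j then 1 else 0)
    (g1 g2 : Fin k → Fin n → F)
    (hg : ∀ i j, dotProduct (g1 i) (g2 j) = if i = j then 1 else 0)
    (C1 C2 : Submodule F (Fin n → F))
    (hC1 : C1 = dualCode C2 ⊔ Submodule.span F (Set.range g1))
    (hC2 : C2 = dualCode C1 ⊔ Submodule.span F (Set.range g2))
    (D2 : Submodule K (Fin N → K))
    (P1 P2 : (Fin N → K) → (Fin N × Fin n → F))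
    (hP1 : ∀ x q, P1 x q = ∑ j, b1.repr (x q.1) j • g1 j q.2)
    (hP2 : ∀ x q, P2 x q = ∑ j, b2.repr (x q.1) j • g2 j q.2) :
    dualCode (Submodule.span F (P1 '' (dualCode D2 : Set (Fin N → K)))
        ⊔ blockCode (dualCode C2))
      = Submodule.span F (P2 '' (D2 : Set (Fin N → K))) ⊔ blockCode (dualCode C1) := by
  obtain rfl : P1 = concatEncode b1 g1 := funext fun x => funext (hP1 x)
  obtain rfl : P2 = concatEncode b2 g2 := funext fun y => funext (hP2 y)
  have hg1 : ∀ a, g1 a ∈ C1 := fun a => hC1 ▸ mem_sup_right (subset_span (Set.mem_range_self a))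
  have hg2 : ∀ a, g2 a ∈ C2 := fun a => hC2 ▸ mem_sup_right (subset_span (Set.mem_range_self a))
  rw [dualCode_sup, dualCode_blockCode, dualCode_dualCode]
  refine le_antisymm (hC2 ▸ dualCode_span_concatEncode_inf_blockCode_le hdualb hg hg1 D2) ?_
  have hP2C2 : span F (concatEncode b2 g2 '' (D2 : Set (Fin N → K))) ≤ blockCode C2 :=
    span_le.2 <| Set.image_subset_iff.2 fun y _ => concatEncode_mem_blockCode b2 hg2 y
  exact sup_le (le_inf (span_concatEncode_le_dualCode hdualb hg D2) hP2C2)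
    (le_inf (blockCode_dualCode_le_dualCode_span b1 hg1 _) (blockCode_mono (hC2 ▸ le_sup_left)))

/-- duality theorem for concatenated CSS code pairs. -/
theorem stmt2 {F K : Type*} [Field F] [Fintype F] [Field K] [Fintype K] [Algebra F K]
    {k n N : ℕ}
    (b1 b2 : Module.Basis (Fin k) F K)
    (hdualb : ∀ i j, Algebra.trace F K (b1 i * b2 j) = if i = j then 1 else 0)
    (g1 g2 : Fin k → Fin n → F)
    (hg : ∀ i j, dotProduct (g1 i) (g2 j) = if i = j then 1 else 0)
    (C1 C2 : Submodule F (Fin n → F))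
    (hCSSin : dualCode C2 ≤ C1)
    (hkin : Module.finrank F C1 + Module.finrank F C2 = n + k)
    (hC1 : C1 = dualCode C2 ⊔ Submodule.span F (Set.range g1))
    (hC2 : C2 = dualCode C1 ⊔ Submodule.span F (Set.range g2))
    (D1 D2 : Submodule K (Fin N → K))
    (hD : dualCode D2 ≤ D1)
    (P1 P2 : (Fin N → K) → (Fin N × Fin n → F))
    (hP1 : ∀ x q, P1 x q = ∑ j, b1.repr (x q.1) j • g1 j q.2)
    (hP2 : ∀ x q, P2 x q = ∑ j, b2.repr (x q.1) j • g2 j q.2) :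
    dualCode (Submodule.span F (P1 '' (dualCode D2 : Set (Fin N → K)))
        ⊔ blockCode (dualCode C2))
      = Submodule.span F (P2 '' (D2 : Set (Fin N → K))) ⊔ blockCode (dualCode C1) :=
  stmt2_general b1 b2 hdualb g1 g2 hg C1 C2 hC1 hC2 D2 P1 P2 hP1 hP2
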